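/- arXiv:2501.15719 — 2 statements merged into one kernel-verified Lean document; each statement's English description precedes it below -/
import Mathlib

section
/- Let K be a totally real number field, M a fractional ideal of K, and q > 0. Let x ∈ M̂₊ be trace-minimal and suppose y ∈ M₊ satisfies tr(xy) < q. Then there exists r ∈ R'_M = R_M ∪ {min M} such that tr(xr) < q. -/
open NumberField
open scoped nonZeroDivisors

/-- `x ∈ K` is totally positive: positive under every real embedding. -/
def TotPos {K : Type*} [Field K] (x : K) : Prop := ∀ φ : K →+* ℝ, 0 < φ x

/-- `y` is trace-minimal: `tr(uy) ≥ tr(y)` for every totally positive unit `u`. -/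
def TraceMin {K : Type*} [Field K] [NumberField K] (y : K) : Prop :=
  ∀ u : (𝓞 K)ˣ, TotPos ((u : 𝓞 K) : K) →
    Algebra.trace ℚ K y ≤ Algebra.trace ℚ K (((u : 𝓞 K) : K) * y)

/-- `x` is an `M`-reducer (with `m = min M`): a totally positive element of `M` with
`tr(xy) < m·tr(y)` for some totally positive trace-minimal `y`. -/
def IsReducer {K : Type*} [Field K] [NumberField K]
    (M : FractionalIdeal (𝓞 K)⁰ K) (m : ℚ) (x : K) : Prop :=
  x ∈ M ∧ TotPos x ∧
    ∃ y : K, TotPos y ∧ TraceMin y ∧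
      Algebra.trace ℚ K (x * y) < m * Algebra.trace ℚ K y

/-- Let `K` be totally real, `M` a fractional ideal, `q > 0`.  If `x ∈ M̂₊` is trace-minimal
and `y ∈ M₊` satisfies `tr(xy) < q`, then there is `r ∈ R'_M = R_M ∪ {min M}` with
`tr(xr) < q`. -/
theorem stmt11
    (K : Type*) [Field K] [NumberField K]
    (htotreal : ∀ v : InfinitePlace K, v.IsReal)
    (M : FractionalIdeal (𝓞 K)⁰ K) (mmin : ℚ)
    (hmmin : IsLeast {r : ℚ | 0 < r ∧ algebraMap ℚ K r ∈ M} mmin)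
    (q : ℚ) (hq : 0 < q)
    (x : K) (hxdual : ∀ m ∈ M, ∃ n : ℤ, Algebra.trace ℚ K (x * m) = (n : ℚ))
    (hxpos : TotPos x) (hxmin : TraceMin x)
    (y : K) (hyM : y ∈ M) (hypos : TotPos y)
    (hxy : Algebra.trace ℚ K (x * y) < q) :
    ∃ r : K, (IsReducer M mmin r ∨ r = algebraMap ℚ K mmin) ∧
      Algebra.trace ℚ K (x * r) < q := by
  have key : Algebra.trace ℚ K (x * algebraMap ℚ K mmin) = mmin * Algebra.trace ℚ K x := by
    rw [mul_comm, ← Algebra.smul_def, map_smul, smul_eq_mul]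
  by_cases h : mmin * Algebra.trace ℚ K x < q
  · exact ⟨algebraMap ℚ K mmin, Or.inr rfl, by rw [key]; exact h⟩
  · refine ⟨y, Or.inl ⟨hyM, hypos, x, hxpos, hxmin, ?_⟩, hxy⟩
    rw [mul_comm]
    exact lt_of_lt_of_le hxy (not_lt.mp h)
end

section
/- Let K = ℚ(√65) and let x = (9 + √65)/2 and x̄ = (9 − √65)/2. Then x, x̄ ∈ O_K are totally positive with x·x̄ = 4 and tr(x) = tr(x̄) = 9; both x and x̄ are trace-minimal, i.e. tr(ux) ≥ 9 and tr(ux̄) ≥ 9 for every totally positive unit u of O_K; and tr(x·x̄) = 8 < 9 = min(O_K)·tr(x̄), so that x (and likewise x̄) is an O_K-reducer and x is an element of Λ_9(O_K) having no multiple by a totally positive unit of trace less than 9. -/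
open NumberField

open Polynomial in
/-- A rational whose square is an integer is itself an integer. -/
lemma rat_int_of_sq_int (q : ℚ) (c : ℤ) (hc : q ^ 2 = (c : ℚ)) :
    ∃ n : ℤ, (n : ℚ) = q ∧ n ^ 2 = c := by
  have hint : IsIntegral ℤ q := by
    refine ⟨X ^ 2 - C c, monic_X_pow_sub_C c two_ne_zero, ?_⟩
    rw [← Polynomial.aeval_def]
    simp [hc]
  obtain ⟨n, hn⟩ := IsIntegrallyClosed.isIntegral_iff.mp hint
  have hn' : (n : ℚ) = q := by exact_mod_cast hn
  refine ⟨n, hn', ?_⟩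
  have : ((n ^ 2 : ℤ) : ℚ) = (c : ℚ) := by push_cast [hn']; exact hc
  exact_mod_cast this

lemma not_rat_sq (c a : ℤ) (h0 : 0 ≤ a) (h1 : a ^ 2 < c) (h2 : c < (a + 1) ^ 2) (q : ℚ) :
    q ^ 2 ≠ (c : ℚ) := by
  intro h
  obtain ⟨n, -, hn2⟩ := rat_int_of_sq_int q c h
  have h4 : |n| ^ 2 = c := by rw [sq_abs]; exact hn2
  rcases le_or_gt |n| a with hle | hlt
  · have := pow_le_pow_left₀ (abs_nonneg n) hle 2
    omega
  · have h5 : a + 1 ≤ |n| := hlt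
    have := pow_le_pow_left₀ (by omega : (0:ℤ) ≤ a + 1) h5 2
    omega

lemma t_eq_four_or_nine_le (t : ℤ) (b : ℚ) (ht1 : 1 ≤ t)
    (heq : (t : ℚ) ^ 2 - 260 * b ^ 2 = 16) : t = 4 ∨ 9 ≤ t := by
  by_contra hcon
  push_neg at hcon
  obtain ⟨hne4, h8⟩ := hcon
  have h8' : t ≤ 8 := by omega
  have ht4 : 4 ≤ t := by
    by_contra h4'
    push_neg at h4'
    have h3' : t ≤ 3 := by omega
    have hq3 : (t : ℚ) ≤ 3 := by exact_mod_cast h3'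
    have hq1 : (1 : ℚ) ≤ (t : ℚ) := by exact_mod_cast ht1
    nlinarith [sq_nonneg b]
  have ht5 : 5 ≤ t := by omega
  interval_cases t
  · refine not_rat_sq 2340 48 (by norm_num) (by norm_num) (by norm_num) (260 * b) ?_
    push_cast at heq ⊢
    linear_combination (-260 : ℚ) * heq
  · refine not_rat_sq 5200 72 (by norm_num) (by norm_num) (by norm_num) (260 * b) ?_
    push_cast at heq ⊢
    linear_combination (-260 : ℚ) * heq
  · refine not_rat_sq 8580 92 (by norm_num) (by norm_num) (by norm_num) (260 * b) ?_
    push_cast at heq ⊢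
    linear_combination (-260 : ℚ) * heq
  · refine not_rat_sq 12480 111 (by norm_num) (by norm_num) (by norm_num) (260 * b) ?_
    push_cast at heq ⊢
    linear_combination (-260 : ℚ) * heq

set_option maxHeartbeats 1000000 in
/-- In `K = ℚ(√65)`, set `x = (9+√65)/2` and `x̄ = (9−√65)/2`.  Then `x, x̄` are totally
positive elements of `O_K` with `x·x̄ = 4`, `tr x = tr x̄ = 9`, `min O_K = 1`, both are
trace-minimal, and `tr(x·x̄) = 8 < 9 = (min O_K)·tr(x̄)`, so `x` (and likewise `x̄`) is an
`O_K`-reducer, and `x ∈ Λ_9(O_K)` has no multiple by a totally positive unit of trace less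
than `9`. -/
theorem stmt17
    (K : Type*) [Field K] [NumberField K]
    (s : K) (hs : s ^ 2 = 65) (hdeg : Module.finrank ℚ K = 2)
    (x y : K) (hx : x = (9 + s) / 2) (hy : y = (9 - s) / 2) :
    (IsIntegral ℤ x ∧ IsIntegral ℤ y) ∧
    (TotPos x ∧ TotPos y) ∧
    x * y = 4 ∧
    (Algebra.trace ℚ K x = 9 ∧ Algebra.trace ℚ K y = 9) ∧
    IsLeast {r : ℚ | 0 < r ∧ IsIntegral ℤ (algebraMap ℚ K r)} 1 ∧
    (TraceMin x ∧ TraceMin y) ∧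
    (∀ u : (𝓞 K)ˣ, TotPos ((u : 𝓞 K) : K) →
      9 ≤ Algebra.trace ℚ K (((u : 𝓞 K) : K) * x) ∧
      9 ≤ Algebra.trace ℚ K (((u : 𝓞 K) : K) * y)) ∧
    (Algebra.trace ℚ K (x * y) = 8 ∧
      Algebra.trace ℚ K (x * y) < 1 * Algebra.trace ℚ K y) ∧
    (∃ z : K, TotPos z ∧ TraceMin z ∧
      Algebra.trace ℚ K (x * z) < 1 * Algebra.trace ℚ K z) ∧
    (∃ z : K, TotPos z ∧ TraceMin z ∧
      Algebra.trace ℚ K (y * z) < 1 * Algebra.trace ℚ K z) ∧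
    (∃ m : K, IsIntegral ℤ m ∧ TotPos m ∧ Algebra.trace ℚ K (x * m) < 9) := by
  classical
  have inj : Function.Injective (algebraMap ℚ K) := (algebraMap ℚ K).injective
  have hQ : ∀ q : ℚ, algebraMap ℚ K q = (q : K) := fun q => eq_ratCast _ q
  -- basic products
  have hxy : x * y = 4 := by rw [hx, hy]; linear_combination (-(1 : K) / 4) * hs
  -- integrality of x and y
  have hx_int : IsIntegral ℤ x := by
    refine ⟨Polynomial.X ^ 2 - Polynomial.C 9 * Polynomial.X + Polynomial.C 4, ?_, ?_⟩
    · monicity!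
    · have : x ^ 2 - 9 * x + 4 = 0 := by rw [hx]; linear_combination ((1 : K) / 4) * hs
      simpa using this
  have hy_int : IsIntegral ℤ y := by
    refine ⟨Polynomial.X ^ 2 - Polynomial.C 9 * Polynomial.X + Polynomial.C 4, ?_, ?_⟩
    · monicity!
    · have : y ^ 2 - 9 * y + 4 = 0 := by rw [hy]; linear_combination ((1 : K) / 4) * hs
      simpa using this
  -- total positivity of x and y
  have hsq : ∀ φ : K →+* ℝ, (φ s) ^ 2 = 65 := by
    intro φ
    rw [← map_pow, hs]
    exact map_ofNat φ 65
  have hTPx : TotPos x := by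
    intro φ
    have h1 := hsq φ
    rw [hx, map_div₀, map_add]
    have : φ (9 : K) = 9 := by exact_mod_cast map_ofNat φ 9
    rw [this]
    have : φ (2 : K) = 2 := by exact_mod_cast map_ofNat φ 2
    rw [this]
    nlinarith
  have hTPy : TotPos y := by
    intro φ
    have h1 := hsq φ
    rw [hy, map_div₀, map_sub]
    have : φ (9 : K) = 9 := by exact_mod_cast map_ofNat φ 9
    rw [this]
    have : φ (2 : K) = 2 := by exact_mod_cast map_ofNat φ 2
    rw [this]
    nlinarith
  -- s is not rational
  have hsQ : s ∉ (algebraMap ℚ K).range := by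
    rintro ⟨q, hq⟩
    have hq2 : (q : ℚ) ^ 2 = (65 : ℚ) := by
      apply inj
      rw [map_pow, hq, hs]
      rw [hQ]; norm_num
    exact not_rat_sq 65 8 (by norm_num) (by norm_num) (by norm_num) q hq2
  -- minimal polynomial of s
  have hs_intQ : IsIntegral ℚ s := IsIntegral.of_finite ℚ s
  have hroot : Polynomial.aeval s (Polynomial.X ^ 2 - Polynomial.C (65 : ℚ)) = 0 := by
    simp [hs]
  have hmp : minpoly ℚ s = Polynomial.X ^ 2 - Polynomial.C (65 : ℚ) := by
    refine Polynomial.eq_of_dvd_of_natDegree_le_of_leadingCoeff (minpoly.dvd ℚ s hroot) ?_ ?_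
    · rw [Polynomial.natDegree_X_pow_sub_C]
      exact (minpoly.two_le_natDegree_iff hs_intQ).mpr hsQ
    · rw [(minpoly.monic hs_intQ).leadingCoeff, (Polynomial.monic_X_pow_sub_C (65:ℚ) two_ne_zero).leadingCoeff]
  -- power basis with generator s
  have htop : IntermediateField.adjoin ℚ {s} = ⊤ := by
    refine IntermediateField.eq_of_le_of_finrank_le le_top ?_
    rw [IntermediateField.finrank_top', hdeg, IntermediateField.adjoin.finrank hs_intQ, hmp,
      Polynomial.natDegree_X_pow_sub_C]
  let e : IntermediateField.adjoin ℚ {s} ≃ₐ[ℚ] K :=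
    (IntermediateField.equivOfEq htop).trans IntermediateField.topEquiv
  let pb : PowerBasis ℚ K := (IntermediateField.adjoin.powerBasis hs_intQ).map e
  have hgen : pb.gen = s := by
    simp [pb, e]
  have hdim : pb.dim = 2 := by
    rw [← pb.finrank, hdeg]
  -- trace computations
  have htrQ : ∀ q : ℚ, Algebra.trace ℚ K (algebraMap ℚ K q) = 2 * q := by
    intro q
    rw [Algebra.trace_algebraMap, hdeg]
    push_cast
    ring
  have htrs : Algebra.trace ℚ K s = 0 := by
    have := pb.trace_gen_eq_nextCoeff_minpoly
    rw [hgen, hmp] at this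
    rw [this]
    rw [Polynomial.nextCoeff_of_natDegree_pos (by rw [Polynomial.natDegree_X_pow_sub_C]; norm_num)]
    rw [Polynomial.natDegree_X_pow_sub_C]
    simp [Polynomial.coeff_X_pow]
  -- coordinates
  have hcoords : ∀ z : K, ∃ a b : ℚ, z = algebraMap ℚ K a + b • s := by
    intro z
    have hz : z ∈ (Submodule.span ℚ ({1, s} : Set K)) := by
      have hspan : Submodule.span ℚ (Set.range pb.basis) = ⊤ := pb.basis.span_eq
      have hsub : Set.range pb.basis ⊆ ({1, s} : Set K) := by
        rintro _ ⟨i, rfl⟩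
        have hi : (i : ℕ) < pb.dim := i.isLt
        rw [pb.basis_eq_pow, hgen]
        rcases (by omega : (i : ℕ) = 0 ∨ (i : ℕ) = 1) with h | h <;> rw [h] <;> simp
      have : (⊤ : Submodule ℚ K) ≤ Submodule.span ℚ ({1, s} : Set K) := by
        rw [← hspan]
        exact Submodule.span_mono hsub
      exact this trivial
    rw [Submodule.mem_span_pair] at hz
    obtain ⟨a, b, hab⟩ := hz
    refine ⟨a, b, ?_⟩
    rw [← hab, Algebra.smul_def, mul_one]
  have htr : ∀ a b : ℚ, Algebra.trace ℚ K (algebraMap ℚ K a + b • s) = 2 * a := by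
    intro a b
    rw [map_add, map_smul, htrQ, htrs]
    ring_nf
  -- trace of x and y
  have hxc : x = algebraMap ℚ K (9/2) + (1/2 : ℚ) • s := by
    rw [hx, Algebra.smul_def, hQ, hQ]; push_cast; ring
  have hyc : y = algebraMap ℚ K (9/2) + (-(1/2) : ℚ) • s := by
    rw [hy, Algebra.smul_def, hQ, hQ]; push_cast; ring
  have htrx : Algebra.trace ℚ K x = 9 := by rw [hxc, htr]; norm_num
  have htry : Algebra.trace ℚ K y = 9 := by rw [hyc, htr]; norm_num
  -- conjugation
  have hσroot : Polynomial.aeval (-s) (minpoly ℚ pb.gen) = 0 := by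
    rw [hgen, hmp]; simp [hs]
  let σ : K →ₐ[ℚ] K := pb.lift (-s) hσroot
  have hσs : σ s = -s := by rw [← hgen]; exact pb.lift_gen _ _
  have hσ : ∀ a b : ℚ, σ (algebraMap ℚ K a + b • s) = algebraMap ℚ K a - b • s := by
    intro a b
    rw [Algebra.smul_def, map_add, AlgHom.commutes, map_mul, AlgHom.commutes, hσs]
    ring
  have hNform : ∀ a b : ℚ, (algebraMap ℚ K a + b • s) * σ (algebraMap ℚ K a + b • s)
      = algebraMap ℚ K (a ^ 2 - 65 * b ^ 2) := by
    intro a b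
    rw [hσ, Algebra.smul_def, hQ, hQ, hQ]
    push_cast
    linear_combination (-((b : K)) ^ 2) * hs
  have hσtr : ∀ z : K, σ z = algebraMap ℚ K (Algebra.trace ℚ K z) - z := by
    intro z
    obtain ⟨a, b, rfl⟩ := hcoords z
    rw [hσ, htr, Algebra.smul_def, hQ, hQ, hQ]
    push_cast
    ring
  -- integrality of traces
  have htrInt : ∀ z : K, IsIntegral ℤ z → ∃ n : ℤ, (n : ℚ) = Algebra.trace ℚ K z := by
    intro z hz
    have := Algebra.isIntegral_trace (R := ℤ) (L := ℚ) (F := K) hz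
    obtain ⟨n, hn⟩ := IsIntegrallyClosed.isIntegral_iff.mp this
    exact ⟨n, by exact_mod_cast hn⟩
  have hσint : ∀ z : K, IsIntegral ℤ z → IsIntegral ℤ (σ z) := by
    intro z hz
    obtain ⟨n, hn⟩ := htrInt z hz
    rw [hσtr, ← hn]
    have h1 : algebraMap ℚ K ((n : ℚ)) = algebraMap ℤ K n := by
      rw [hQ]; push_cast; rfl
    rw [h1]
    exact (isIntegral_algebraMap).sub hz
  -- x and y are conjugate
  have hσx : σ x = y := by
    rw [hxc, hσ, hyc, neg_smul, ← sub_eq_add_neg]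
  have hσy : σ y = x := by
    rw [hyc, hσ, hxc, neg_smul, sub_neg_eq_add]
  -- real embeddings
  have hr65 : Real.sqrt 65 ^ 2 = 65 := Real.sq_sqrt (by norm_num)
  have hφproot : Polynomial.aeval (Real.sqrt 65) (minpoly ℚ pb.gen) = 0 := by
    rw [hgen, hmp]; simp [hr65]
  have hφmroot : Polynomial.aeval (-Real.sqrt 65) (minpoly ℚ pb.gen) = 0 := by
    rw [hgen, hmp]; simp [hr65]
  let φp : K →ₐ[ℚ] ℝ := pb.lift (Real.sqrt 65) hφproot
  let φm : K →ₐ[ℚ] ℝ := pb.lift (-Real.sqrt 65) hφmroot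
  have hφps : φp s = Real.sqrt 65 := by rw [← hgen]; exact pb.lift_gen _ _
  have hφms : φm s = -Real.sqrt 65 := by rw [← hgen]; exact pb.lift_gen _ _
  have hQR : ∀ q : ℚ, algebraMap ℚ ℝ q = (q : ℝ) := fun q => eq_ratCast _ q
  have hφpc : ∀ a b : ℚ, φp (algebraMap ℚ K a + b • s) = a + b * Real.sqrt 65 := by
    intro a b
    rw [Algebra.smul_def, map_add, AlgHom.commutes, map_mul, AlgHom.commutes, hφps, hQR, hQR]
  have hφmc : ∀ a b : ℚ, φm (algebraMap ℚ K a + b • s) = a - b * Real.sqrt 65 := by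
    intro a b
    rw [Algebra.smul_def, map_add, AlgHom.commutes, map_mul, AlgHom.commutes, hφms, hQR, hQR]
    ring
  -- norms of x and y
  have h4K : algebraMap ℚ K 4 = (4 : K) := by rw [hQ]; norm_num
  have hxN : x * σ x = algebraMap ℚ K 4 := by rw [hσx, hxy, h4K]
  have hyN : y * σ y = algebraMap ℚ K 4 := by rw [hσy, h4K, ← hxy]; ring
  -- trace of x*y
  have htrxy : Algebra.trace ℚ K (x * y) = 8 := by
    rw [hxy, ← h4K, htrQ]; norm_num
  -- the key claim
  have key : ∀ w : K, IsIntegral ℤ w → TotPos w → Algebra.trace ℚ K w = 9 →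
      w * σ w = algebraMap ℚ K 4 →
      ∀ u : (𝓞 K)ˣ, TotPos ((u : 𝓞 K) : K) →
        9 ≤ Algebra.trace ℚ K (((u : 𝓞 K) : K) * w) := by
    intro w hwint hwpos hwtr hwN u hu
    set v : K := ((u : 𝓞 K) : K) with hv
    set v' : K := (((u⁻¹ : (𝓞 K)ˣ) : 𝓞 K) : K) with hv'
    have hvint : IsIntegral ℤ v := RingOfIntegers.isIntegral_coe _
    have hv'int : IsIntegral ℤ v' := RingOfIntegers.isIntegral_coe _
    have hvv' : v * v' = 1 := by
      have h0 := congrArg (algebraMap (𝓞 K) K) u.mul_inv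
      rw [map_mul, map_one] at h0
      exact h0
    obtain ⟨av, bv, hvc⟩ := hcoords v
    obtain ⟨av', bv', hv'c⟩ := hcoords v'
    set Nv : ℚ := av ^ 2 - 65 * bv ^ 2 with hNv_def
    set Nv' : ℚ := av' ^ 2 - 65 * bv' ^ 2 with hNv'_def
    have hNv : v * σ v = algebraMap ℚ K Nv := by rw [hvc]; exact hNform av bv
    have hNv' : v' * σ v' = algebraMap ℚ K Nv' := by rw [hv'c]; exact hNform av' bv'
    have hNvint : ∃ k : ℤ, (k : ℚ) = Nv := by
      have h1 : IsIntegral ℤ (algebraMap ℚ K Nv) := hNv ▸ hvint.mul (hσint v hvint)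
      rw [isIntegral_algebraMap_iff inj] at h1
      obtain ⟨k, hk⟩ := IsIntegrallyClosed.isIntegral_iff.mp h1
      exact ⟨k, by exact_mod_cast hk⟩
    have hNv'int : ∃ k : ℤ, (k : ℚ) = Nv' := by
      have h1 : IsIntegral ℤ (algebraMap ℚ K Nv') := hNv' ▸ hv'int.mul (hσint v' hv'int)
      rw [isIntegral_algebraMap_iff inj] at h1
      obtain ⟨k, hk⟩ := IsIntegrallyClosed.isIntegral_iff.mp h1
      exact ⟨k, by exact_mod_cast hk⟩
    obtain ⟨n, hn⟩ := hNvint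
    obtain ⟨m, hm⟩ := hNv'int
    have hNvpos : 0 < Nv := by
      have h1 : (0 : ℝ) < φp v := hu φp.toRingHom
      have h2 : (0 : ℝ) < φp (σ v) := hu (φp.toRingHom.comp σ.toRingHom)
      have h3 : (0 : ℝ) < φp (v * σ v) := by rw [map_mul]; exact mul_pos h1 h2
      rw [hNv, AlgHom.commutes, hQR] at h3
      exact_mod_cast h3
    have hprod : Nv * Nv' = 1 := by
      apply inj
      rw [map_mul, ← hNv, ← hNv', map_one]
      calc v * σ v * (v' * σ v') = (v * v') * σ (v * v') := by rw [map_mul]; ring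
        _ = 1 := by rw [hvv', map_one, mul_one]
    have hNv1 : Nv = 1 := by
      have hnm : n * m = 1 := by
        have : ((n * m : ℤ) : ℚ) = 1 := by push_cast; rw [hn, hm]; exact hprod
        exact_mod_cast this
      have hnpos : 0 < n := by
        have : (0 : ℚ) < (n : ℚ) := by rw [hn]; exact hNvpos
        exact_mod_cast this
      rcases Int.isUnit_iff.mp (IsUnit.of_mul_eq_one m hnm) with h | h
      · rw [← hn, h]; norm_num
      · omega
    obtain ⟨a, b, hzc⟩ := hcoords (v * w)
    have hzN : (v * w) * σ (v * w) = algebraMap ℚ K 4 := by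
      rw [map_mul]
      calc v * w * (σ v * σ w) = (v * σ v) * (w * σ w) := by ring
        _ = algebraMap ℚ K Nv * algebraMap ℚ K 4 := by rw [hNv, hwN]
        _ = algebraMap ℚ K 4 := by rw [hNv1, map_one, one_mul]
    have hab : a ^ 2 - 65 * b ^ 2 = 4 := by
      apply inj
      rw [← hNform a b, ← hzc, hzN]
    have hzint : IsIntegral ℤ (v * w) := hvint.mul hwint
    obtain ⟨t, ht⟩ := htrInt _ hzint
    have htra : Algebra.trace ℚ K (v * w) = 2 * a := by rw [hzc]; exact htr a b
    have hppos : (0 : ℝ) < φp (v * w) := by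
      have h1 : (0 : ℝ) < φp v := hu φp.toRingHom
      have h2 : (0 : ℝ) < φp w := hwpos φp.toRingHom
      rw [map_mul]; exact mul_pos h1 h2
    have hmpos : (0 : ℝ) < φm (v * w) := by
      have h1 : (0 : ℝ) < φm v := hu φm.toRingHom
      have h2 : (0 : ℝ) < φm w := hwpos φm.toRingHom
      rw [map_mul]; exact mul_pos h1 h2
    have hapos : 0 < a := by
      rw [hzc] at hppos hmpos
      rw [hφpc] at hppos
      rw [hφmc] at hmpos
      have : (0 : ℝ) < (a : ℝ) := by linarith
      exact_mod_cast this
    have htq : (t : ℚ) = 2 * a := ht.trans htra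
    have ht1 : 1 ≤ t := by
      have h0 : (0 : ℚ) < (t : ℚ) := by rw [htq]; linarith
      have : (0 : ℤ) < t := by exact_mod_cast h0
      omega
    have heq : (t : ℚ) ^ 2 - 260 * b ^ 2 = 16 := by
      rw [htq]; linear_combination 4 * hab
    have ht9 : 9 ≤ t := by
      rcases t_eq_four_or_nine_le t b ht1 heq with ht4 | ht9
      · -- t = 4 : then b = 0 and v * w = 2, so u = σw/2 has trace 9/2, impossible
        exfalso
        subst ht4
        push_cast at heq htq
        have hb2 : b ^ 2 = 0 := by linarith
        have hb : b = 0 := by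
          exact pow_eq_zero_iff (by norm_num) |>.mp hb2
        have ha2 : a = 2 := by linarith
        have hz2 : v * w = (2 : K) := by
          rw [hzc, hb, ha2, zero_smul, add_zero, hQ]; norm_num
        have hwN' : w * σ w = (4 : K) := by rw [hwN, h4K]
        have h4v : (4 : K) * v = 2 * σ w := by
          calc (4 : K) * v = v * (w * σ w) := by rw [hwN']; ring
            _ = (v * w) * σ w := by ring
            _ = 2 * σ w := by rw [hz2]
        obtain ⟨k, hk⟩ := htrInt v hvint
        have htrσw : Algebra.trace ℚ K (σ w) = 9 := by
          rw [hσtr, map_sub, htrQ, hwtr]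
          ring
        have e1 : Algebra.trace ℚ K ((4 : K) * v) = 4 * (k : ℚ) := by
          have h4s : (4 : K) * v = (4 : ℚ) • v := by rw [Algebra.smul_def, hQ]; norm_num
          rw [h4s, map_smul, ← hk, smul_eq_mul]
        have e2 : Algebra.trace ℚ K ((2 : K) * σ w) = 18 := by
          have h2s : (2 : K) * σ w = (2 : ℚ) • σ w := by rw [Algebra.smul_def, hQ]; norm_num
          rw [h2s, map_smul, htrσw, smul_eq_mul]
          norm_num
        have e3 : 4 * (k : ℚ) = 18 := by rw [← e1, h4v, e2]
        have e4 : (4 * k : ℤ) = 18 := by exact_mod_cast e3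
        omega
      · exact ht9
    rw [← ht]
    exact_mod_cast ht9
  -- assemble everything
  have hTMx : TraceMin x := by
    intro u hu
    rw [htrx]
    exact key x hx_int hTPx htrx hxN u hu
  have hTMy : TraceMin y := by
    intro u hu
    rw [htry]
    exact key y hy_int hTPy htry hyN u hu
  refine ⟨⟨hx_int, hy_int⟩, ⟨hTPx, hTPy⟩, hxy, ⟨htrx, htry⟩, ?_, ⟨hTMx, hTMy⟩, ?_, ?_, ?_, ?_, ?_⟩
  · constructor
    · exact ⟨one_pos, by rw [map_one]; exact isIntegral_one⟩
    · rintro r ⟨hr, hint⟩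
      rw [isIntegral_algebraMap_iff inj] at hint
      obtain ⟨k, hk⟩ := IsIntegrallyClosed.isIntegral_iff.mp hint
      have hk' : (k : ℚ) = r := by exact_mod_cast hk
      have h0 : 0 < k := by
        have : (0 : ℚ) < (k : ℚ) := by rw [hk']; exact hr
        exact_mod_cast this
      have : (1 : ℤ) ≤ k := h0
      calc (1 : ℚ) ≤ (k : ℚ) := by exact_mod_cast this
        _ = r := hk'
  · intro u hu
    exact ⟨key x hx_int hTPx htrx hxN u hu, key y hy_int hTPy htry hyN u hu⟩
  · refine ⟨htrxy, ?_⟩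
    rw [htrxy, htry]; norm_num
  · refine ⟨y, hTPy, hTMy, ?_⟩
    rw [htrxy, htry]; norm_num
  · refine ⟨x, hTPx, hTMx, ?_⟩
    rw [mul_comm y x, htrxy, htrx]; norm_num
  · refine ⟨y, hy_int, hTPy, ?_⟩
    rw [htrxy]; norm_num
end
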